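/- For every λ ∈ (−1/2, 0) ∪ (0, ∞) and every integer n ≥ 0, ∫₀¹ (x²·[C_{n+1}^{(λ+1)}(x)]² + [C_n^{(λ+1)}(x)]²) dx + (1/(2λ))·∫₀¹ (1−x²)·[C_{n+1}^{(λ+1)}(x)]² dx = ((n+2)²/(8λ³))·[C_{n+2}^{(λ)}(1)]² + ((2λ−1)/(2λ))·((n+2)²/(4λ²))·‖C_{n+2}^{(λ)}‖₂². -/

import Mathlib

open Real MeasureTheory Finset

/-- Gegenbauer polynomials `C_n^{(λ)}`: `C_0 = 1`, `C_1 = 2λx`, and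
`n C_n(x) = 2(n+λ-1) x C_{n-1}(x) - (n+2λ-2) C_{n-2}(x)` for `n ≥ 2`. -/
noncomputable def gegenbauer (lam : ℝ) : ℕ → ℝ → ℝ
  | 0, _ => 1
  | 1, x => 2 * lam * x
  | n + 2, x =>
      (2 * ((n : ℝ) + 1 + lam) * x * gegenbauer lam (n + 1) x
        - ((n : ℝ) + 2 * lam) * gegenbauer lam n x) / ((n : ℝ) + 2)

lemma geg_zero (lam x : ℝ) : gegenbauer lam 0 x = 1 := rfl
lemma geg_one (lam x : ℝ) : gegenbauer lam 1 x = 2 * lam * x := rfl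
lemma geg_rec (lam : ℝ) (n : ℕ) (x : ℝ) :
    gegenbauer lam (n + 2) x =
      (2 * ((n : ℝ) + 1 + lam) * x * gegenbauer lam (n + 1) x
        - ((n : ℝ) + 2 * lam) * gegenbauer lam n x) / ((n : ℝ) + 2) := rfl

lemma geg_rec' (lam : ℝ) (n : ℕ) (x : ℝ) :
    ((n : ℝ) + 2) * gegenbauer lam (n + 2) x =
      2 * ((n : ℝ) + 1 + lam) * x * gegenbauer lam (n + 1) x
        - ((n : ℝ) + 2 * lam) * gegenbauer lam n x := by
  rw [geg_rec]
  have h : ((n : ℝ) + 2) ≠ 0 := by positivity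
  field_simp

lemma geg_L23 (mu : ℝ) (n : ℕ) (x : ℝ) :
    ((n : ℝ) + 2) * gegenbauer mu (n + 2) x
        = 2 * mu * (x * gegenbauer (mu + 1) (n + 1) x - gegenbauer (mu + 1) n x)
      ∧ ((n : ℝ) + 1 + 2 * mu) * gegenbauer mu (n + 1) x
        = 2 * mu * (gegenbauer (mu + 1) (n + 1) x - x * gegenbauer (mu + 1) n x) := by
  induction n using Nat.twoStepInduction with
  | zero =>
      have h := geg_rec' mu 0 x
      constructor
      · push_cast
        simp only [Nat.reduceAdd, geg_one, geg_zero] at h ⊢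
        linear_combination h
      · push_cast
        simp only [Nat.reduceAdd, geg_one, geg_zero]
        ring
  | one =>
      have hg := geg_rec' mu 1 x
      have hd := geg_rec' (mu + 1) 0 x
      have hg0 := geg_rec' mu 0 x
      push_cast at hg hd hg0 ⊢
      simp only [geg_one, geg_zero] at hg hd hg0 ⊢
      constructor
      · linear_combination hg - mu * x * hd + (2 + mu) * x * hg0
      · linear_combination (1 + mu) * hg0 - mu * hd
  | more n ih1 ih2 =>
      obtain ⟨ihA1, ihB1⟩ := ih1
      obtain ⟨ihA2, ihB2⟩ := ih2
      have h3 : ((n : ℝ) + 3) ≠ 0 := by positivity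
      have hg4 := geg_rec' mu (n + 2) x
      have hg3 := geg_rec' mu (n + 1) x
      have hd3 := geg_rec' (mu + 1) (n + 1) x
      push_cast at hg4 hg3 hd3 ihA2 ihB2 ⊢
      constructor
      · refine mul_left_cancel₀ h3 ?_
        linear_combination ((n : ℝ) + 3) * hg4 - 2 * mu * x * hd3
          + 2 * ((n : ℝ) + 3 + mu) * x * ihA2 - ((n : ℝ) + 3) * ihB2
      · refine mul_left_cancel₀ h3 ?_
        linear_combination ((n : ℝ) + 3 + 2 * mu) * hg3 - 2 * mu * hd3
          + x * ((n : ℝ) + 2 * mu + 3) * (ihA1 + ihB2) - ((n : ℝ) + 3 + 2 * mu) * ihB1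
lemma geg_L4 (mu : ℝ) (n : ℕ) (x : ℝ) :
    2 * mu * (1 - x ^ 2) * gegenbauer (mu + 1) n x
      = ((n : ℝ) + 2 * mu) * gegenbauer mu n x
        - ((n : ℝ) + 1) * x * gegenbauer mu (n + 1) x := by
  induction n using Nat.twoStepInduction with
  | zero =>
      push_cast
      simp only [Nat.reduceAdd, geg_one, geg_zero]
      ring
  | one =>
      have hg := geg_rec' mu 0 x
      push_cast at hg ⊢
      simp only [Nat.reduceAdd, geg_one, geg_zero] at hg ⊢
      linear_combination x * hg
  | more n ih1 ih2 =>
      have h2 : ((n : ℝ) + 2) ≠ 0 := by positivity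
      have hg3 := geg_rec' mu (n + 1) x
      have hg2 := geg_rec' mu n x
      have hd2 := geg_rec' (mu + 1) n x
      simp only [show n + 1 + 2 = n + 3 from rfl, show n + 1 + 1 = n + 2 from rfl,
        show n + 2 + 1 = n + 3 from rfl] at hg3 ih2 ⊢
      push_cast at hg3 hg2 hd2 ih1 ih2 ⊢
      refine mul_left_cancel₀ h2 ?_
      linear_combination 2 * mu * (1 - x ^ 2) * hd2 + 2 * ((n : ℝ) + 2 + mu) * x * ih2
        - ((n : ℝ) + 2 * mu + 2) * ih1 + ((n : ℝ) + 2) * x * hg3 - ((n : ℝ) + 2 + 2 * mu) * hg2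
lemma geg_hasDerivAt (mu : ℝ) (n : ℕ) (x : ℝ) :
    HasDerivAt (fun y => gegenbauer mu (n + 1) y) (2 * mu * gegenbauer (mu + 1) n x) x := by
  induction n using Nat.twoStepInduction with
  | zero =>
      have hfun : (fun y => gegenbauer mu (0 + 1) y) = fun y => 2 * mu * y :=
        funext fun y => geg_one mu y
      rw [hfun, geg_zero]
      simpa using (hasDerivAt_id x).const_mul (2 * mu)
  | one =>
      have hfun : (fun y => gegenbauer mu (1 + 1) y) = fun y => 2 * mu * (1 + mu) * y ^ 2 - mu := by
        funext y
        have h := geg_rec' mu 0 y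
        push_cast at h
        simp only [Nat.reduceAdd, geg_one, geg_zero] at h
        linarith
      rw [hfun]
      have h := ((hasDerivAt_pow 2 x).const_mul (2 * mu * (1 + mu))).sub_const mu
      have hval : 2 * mu * (1 + mu) * (↑2 * x ^ (2 - 1)) = 2 * mu * gegenbauer (mu + 1) 1 x := by
        rw [geg_one]; push_cast; ring
      exact hval ▸ h
  | more n ih1 ih2 =>
      simp only [show n + 2 + 1 = n + 1 + 2 from rfl]
      have h3 : ((n : ℝ) + 3) ≠ 0 := by positivity
      have hfun : (fun y => gegenbauer mu (n + 1 + 2) y)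
          = fun y => (2 * ((n : ℝ) + 2 + mu) * (y * gegenbauer mu (n + 1 + 1) y)
              - ((n : ℝ) + 1 + 2 * mu) * gegenbauer mu (n + 1) y) / ((n : ℝ) + 3) := by
        funext y
        rw [geg_rec mu (n + 1) y]
        push_cast
        ring
      rw [hfun]
      have h := ((((hasDerivAt_id x).mul ih2).const_mul (2 * ((n : ℝ) + 2 + mu))).sub
        (ih1.const_mul ((n : ℝ) + 1 + 2 * mu))).div_const ((n : ℝ) + 3)
      have hval : (2 * ((n : ℝ) + 2 + mu) * (1 * gegenbauer mu (n + 1 + 1) x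
            + x * (2 * mu * gegenbauer (mu + 1) (n + 1) x))
          - ((n : ℝ) + 1 + 2 * mu) * (2 * mu * gegenbauer (mu + 1) n x)) / ((n : ℝ) + 3)
          = 2 * mu * gegenbauer (mu + 1) (n + 2) x := by
        rw [div_eq_iff h3]
        have hA := (geg_L23 mu n x).1
        have hB := (geg_L23 mu (n + 1) x).2
        have hd := geg_rec' (mu + 1) n x
        simp only [show n + 1 + 1 = n + 2 from rfl] at hB ⊢
        push_cast at hA hB hd
        linear_combination hA + hB - 2 * mu * hd
      exact hval ▸ h
lemma geg_continuous (mu : ℝ) (m : ℕ) : Continuous (fun y => gegenbauer mu m y) := by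
  cases m with
  | zero =>
      have : (fun y => gegenbauer mu 0 y) = fun _ : ℝ => (1 : ℝ) := funext fun y => geg_zero mu y
      rw [this]; exact continuous_const
  | succ k =>
      have : Differentiable ℝ (fun y => gegenbauer mu (k + 1) y) :=
        fun y => (geg_hasDerivAt mu k y).differentiableAt
      exact this.continuous
theorem gegenbauer_sum_of_squares_identity (lam : ℝ)
    (hlam : lam ∈ Set.Ioo (-(1/2) : ℝ) 0 ∪ Set.Ioi (0 : ℝ)) (n : ℕ) :
    (∫ x in (0:ℝ)..1,
        (x ^ 2 * (gegenbauer (lam + 1) (n + 1) x) ^ 2 + (gegenbauer (lam + 1) n x) ^ 2))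
      + (1 / (2 * lam))
          * (∫ x in (0:ℝ)..1, (1 - x ^ 2) * (gegenbauer (lam + 1) (n + 1) x) ^ 2) =
    (((n : ℝ) + 2) ^ 2 / (8 * lam ^ 3)) * (gegenbauer lam (n + 2) 1) ^ 2
      + ((2 * lam - 1) / (2 * lam)) * (((n : ℝ) + 2) ^ 2 / (4 * lam ^ 2))
          * (∫ x in (0:ℝ)..1, (gegenbauer lam (n + 2) x) ^ 2) := by
  have hl0 : lam ≠ 0 := by
    rcases hlam with h | h
    · exact ne_of_lt h.2
    · exact ne_of_gt h
  have hcD : Continuous (fun y => gegenbauer (lam + 1) (n + 1) y) := geg_continuous _ _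
  have hcE : Continuous (fun y => gegenbauer (lam + 1) n y) := geg_continuous _ _
  have hcG : Continuous (fun y => gegenbauer lam (n + 2) y) := geg_continuous _ _
  have hc1 : Continuous (fun x : ℝ =>
      x ^ 2 * (gegenbauer (lam + 1) (n + 1) x) ^ 2 + (gegenbauer (lam + 1) n x) ^ 2) := by
    exact ((continuous_pow 2).mul (hcD.pow 2)).add (hcE.pow 2)
  have hc2 : Continuous (fun x : ℝ => (1 - x ^ 2) * (gegenbauer (lam + 1) (n + 1) x) ^ 2) := by
    exact ((continuous_const.sub (continuous_pow 2)).mul (hcD.pow 2))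
  have hc3 : Continuous (fun x : ℝ => (gegenbauer lam (n + 2) x) ^ 2) := hcG.pow 2
  have hi1 : IntervalIntegrable (fun x : ℝ =>
      x ^ 2 * (gegenbauer (lam + 1) (n + 1) x) ^ 2 + (gegenbauer (lam + 1) n x) ^ 2)
      volume 0 1 := hc1.intervalIntegrable _ _
  have hi2 : IntervalIntegrable (fun x : ℝ =>
      (1 - x ^ 2) * (gegenbauer (lam + 1) (n + 1) x) ^ 2) volume 0 1 := hc2.intervalIntegrable _ _
  have hi3 : IntervalIntegrable (fun x : ℝ => (gegenbauer lam (n + 2) x) ^ 2) volume 0 1 :=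
    hc3.intervalIntegrable _ _
  -- FTC
  have hderiv : ∀ x ∈ Set.uIcc (0:ℝ) 1,
      HasDerivAt (fun y => ((n : ℝ) + 2) ^ 2 * (y * (gegenbauer lam (n + 2) y) ^ 2)
          + 4 * lam ^ 2 * ((y - y ^ 3) * (gegenbauer (lam + 1) (n + 1) y) ^ 2))
        (8 * lam ^ 3 * (x ^ 2 * (gegenbauer (lam + 1) (n + 1) x) ^ 2
            + (gegenbauer (lam + 1) n x) ^ 2)
          + 4 * lam ^ 2 * ((1 - x ^ 2) * (gegenbauer (lam + 1) (n + 1) x) ^ 2)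
          - (2 * lam - 1) * ((n : ℝ) + 2) ^ 2 * (gegenbauer lam (n + 2) x) ^ 2) x := by
    intro x _
    have hG := geg_hasDerivAt lam (n + 1) x
    simp only [show n + 1 + 1 = n + 2 from rfl] at hG
    have hD := geg_hasDerivAt (lam + 1) n x
    have hq : HasDerivAt (fun y : ℝ => y - y ^ 3) (1 - ↑3 * x ^ (3 - 1)) x :=
      (hasDerivAt_id x).sub (hasDerivAt_pow 3 x)
    have hF := (((hasDerivAt_id x).mul (hG.pow 2)).const_mul (((n : ℝ) + 2) ^ 2)).add
      ((hq.mul (hD.pow 2)).const_mul (4 * lam ^ 2))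
    refine hF.congr_deriv (Eq.symm ?_)
    have hA := (geg_L23 lam n x).1
    have hB := geg_L4 (lam + 1) n x
    push_cast
    simp only [id_eq, Pi.pow_apply]
    linear_combination
      (4 * lam ^ 2 * gegenbauer (lam + 1) n x
        - 4 * lam ^ 2 * x * gegenbauer (lam + 1) (n + 1) x
        - 2 * lam * ((n : ℝ) + 2) * (2 * x * gegenbauer (lam + 1) (n + 1) x
            + gegenbauer lam (n + 2) x)) * hA
      - 8 * lam ^ 2 * x * gegenbauer (lam + 1) (n + 1) x * hB
  have hcP : Continuous (fun x : ℝ =>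
      8 * lam ^ 3 * (x ^ 2 * (gegenbauer (lam + 1) (n + 1) x) ^ 2
          + (gegenbauer (lam + 1) n x) ^ 2)
        + 4 * lam ^ 2 * ((1 - x ^ 2) * (gegenbauer (lam + 1) (n + 1) x) ^ 2)
        - (2 * lam - 1) * ((n : ℝ) + 2) ^ 2 * (gegenbauer lam (n + 2) x) ^ 2) := by
    exact ((continuous_const.mul hc1).add (continuous_const.mul hc2)).sub
      (continuous_const.mul hc3)
  have key := intervalIntegral.integral_eq_sub_of_hasDerivAt hderiv (hcP.intervalIntegrable _ _)
  have hsplit : (∫ x in (0:ℝ)..1,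
      (8 * lam ^ 3 * (x ^ 2 * (gegenbauer (lam + 1) (n + 1) x) ^ 2
          + (gegenbauer (lam + 1) n x) ^ 2)
        + 4 * lam ^ 2 * ((1 - x ^ 2) * (gegenbauer (lam + 1) (n + 1) x) ^ 2)
        - (2 * lam - 1) * ((n : ℝ) + 2) ^ 2 * (gegenbauer lam (n + 2) x) ^ 2))
      = 8 * lam ^ 3 * (∫ x in (0:ℝ)..1,
          (x ^ 2 * (gegenbauer (lam + 1) (n + 1) x) ^ 2 + (gegenbauer (lam + 1) n x) ^ 2))
        + 4 * lam ^ 2 * (∫ x in (0:ℝ)..1, (1 - x ^ 2) * (gegenbauer (lam + 1) (n + 1) x) ^ 2)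
        - (2 * lam - 1) * ((n : ℝ) + 2) ^ 2 * (∫ x in (0:ℝ)..1, (gegenbauer lam (n + 2) x) ^ 2) := by
    rw [intervalIntegral.integral_sub ((hi1.const_mul _).add (hi2.const_mul _)) (hi3.const_mul _),
      intervalIntegral.integral_add (hi1.const_mul _) (hi2.const_mul _),
      intervalIntegral.integral_const_mul, intervalIntegral.integral_const_mul,
      intervalIntegral.integral_const_mul]
  rw [hsplit] at key
  have hval : (((n : ℝ) + 2) ^ 2 * (1 * (gegenbauer lam (n + 2) 1) ^ 2)
        + 4 * lam ^ 2 * (((1:ℝ) - 1 ^ 3) * (gegenbauer (lam + 1) (n + 1) 1) ^ 2))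
      - (((n : ℝ) + 2) ^ 2 * ((0:ℝ) * (gegenbauer lam (n + 2) 0) ^ 2)
        + 4 * lam ^ 2 * (((0:ℝ) - 0 ^ 3) * (gegenbauer (lam + 1) (n + 1) 0) ^ 2))
      = ((n : ℝ) + 2) ^ 2 * (gegenbauer lam (n + 2) 1) ^ 2 := by ring
  rw [hval] at key
  field_simp
  linear_combination 8 * key
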